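/- arXiv:math/0011048 — 3 statements merged into one kernel-verified Lean document; each statement's English description precedes it below -/
import Mathlib

section
/- For vector fields X on ℝⁿ, identify symmetric contravariant tensor fields with functions on T*ℝⁿ polynomial in the fiber variables ξ, with Lie derivative L_X = (∂X/∂ξ_i)(∂/∂xⁱ) - (∂X/∂xⁱ)(∂/∂ξ_i) where X is regarded as the fiberwise-linear function Xⁱξ_i. Then the map c₁(X) = (∂²Xˡ/∂xⁱ∂xʲ) ξ_l ∂²/∂ξ_i∂ξ_j (equivalently (∂²X/∂xⁱ∂xʲ)(∂²/∂ξ_i∂ξ_j) for X viewed as a function on T*ℝⁿ) satisfies the 1-cocycle identity c₁([X,Y]) = [L_X, c₁(Y)] - [L_Y, c₁(X)]. -/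
noncomputable section

open scoped BigOperators

/-- Symbols: functions of (x, ξ) on T*ℝⁿ. -/
abbrev Symb (n : ℕ) := (Fin n → ℝ) → (Fin n → ℝ) → ℝ

/-- Partial derivative ∂/∂xⁱ of a function on ℝⁿ. -/
def pd {n : ℕ} (i : Fin n) (f : (Fin n → ℝ) → ℝ) : (Fin n → ℝ) → ℝ :=
  fun x => fderiv ℝ f x (Pi.single i 1)

/-- Partial derivative ∂/∂xⁱ of a symbol. -/
def dX {n : ℕ} (i : Fin n) (F : Symb n) : Symb n :=
  fun x ξ => fderiv ℝ (fun y => F y ξ) x (Pi.single i 1)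

/-- Partial derivative ∂/∂ξᵢ of a symbol. -/
def dXi {n : ℕ} (i : Fin n) (F : Symb n) : Symb n :=
  fun x ξ => fderiv ℝ (fun η => F x η) ξ (Pi.single i 1)

/-- Divergence of a vector field on ℝⁿ. -/
def vdiv {n : ℕ} (X : (Fin n → ℝ) → (Fin n → ℝ)) : (Fin n → ℝ) → ℝ :=
  fun x => ∑ i, pd i (fun y => X y i) x

/-- Lie bracket of vector fields [X,Y]ⁱ = Xʲ∂ⱼYⁱ - Yʲ∂ⱼXⁱ. -/
def vbr {n : ℕ} (X Y : (Fin n → ℝ) → (Fin n → ℝ)) : (Fin n → ℝ) → (Fin n → ℝ) :=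
  fun x i => ∑ j, (X x j * pd j (fun y => Y y i) x - Y x j * pd j (fun y => X y i) x)

/-- The Hamiltonian (Lie derivative) action L_X = (∂X/∂ξᵢ)∂/∂xⁱ - (∂X/∂xⁱ)∂/∂ξᵢ
of a vector field X (identified with Xⁱξᵢ) on symbols. -/
def ham {n : ℕ} (X : (Fin n → ℝ) → (Fin n → ℝ)) (F : Symb n) : Symb n :=
  fun x ξ => (∑ i, X x i * dX i F x ξ)
    - ∑ i, (∑ l, pd i (fun y => X y l) x * ξ l) * dXi i F x ξ

/-- Joint smoothness of a symbol. -/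
def SmoothS {n : ℕ} (F : Symb n) : Prop :=
  ContDiff ℝ (⊤ : ℕ∞) (fun p : (Fin n → ℝ) × (Fin n → ℝ) => F p.1 p.2)

/-- The cocycle c₀(X): multiplication by Div X. -/
def c0op {n : ℕ} (X : (Fin n → ℝ) → (Fin n → ℝ)) (F : Symb n) : Symb n :=
  fun x ξ => vdiv X x * F x ξ

/-- The cocycle c₁(X) = (∂²X/∂xⁱ∂xʲ)(∂²/∂ξᵢ∂ξⱼ). -/
def c1op {n : ℕ} (X : (Fin n → ℝ) → (Fin n → ℝ)) (F : Symb n) : Symb n :=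
  fun x ξ => ∑ i, ∑ j,
    (∑ l, pd i (pd j (fun y => X y l)) x * ξ l) * dXi i (dXi j F) x ξ

/-- The cocycle c₂(X) = (∂³X/∂xⁱ∂xʲ∂xˡ)(∂³/∂ξᵢ∂ξⱼ∂ξₗ)
  - 3(∂³X/∂xⁱ∂xʲ∂ξₗ)(∂²/∂ξᵢ∂ξⱼ)(∂/∂xˡ). -/
def c2op {n : ℕ} (X : (Fin n → ℝ) → (Fin n → ℝ)) (F : Symb n) : Symb n :=
  fun x ξ =>
    (∑ i, ∑ j, ∑ l,
      (∑ m, pd i (pd j (pd l (fun y => X y m))) x * ξ m) * dXi i (dXi j (dXi l F)) x ξ)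
    - 3 * ∑ i, ∑ j, ∑ l,
      pd i (pd j (fun y => X y l)) x * dX l (dXi i (dXi j F)) x ξ

/-- Iterated ξ-derivatives along a list of indices. -/
def dXiL {n : ℕ} (L : List (Fin n)) (F : Symb n) : Symb n := L.foldr dXi F

/-- Iterated x-derivatives along a list of indices. -/
def dXL {n : ℕ} (L : List (Fin n)) (F : Symb n) : Symb n := L.foldr dX F

/-- A symbol is polynomial in ξ: all ξ-derivatives of some order N vanish. -/
def PolyXi {n : ℕ} (F : Symb n) : Prop :=
  ∃ N : ℕ, ∀ L : List (Fin n), L.length = N → ∀ x ξ, dXiL L F x ξ = 0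

/-- The normal-symbol composition
A∘B = Σₖ (1/k!) (∂ᵏA/∂ξ_{i₁}…∂ξ_{i_k})(∂ᵏB/∂x^{i₁}…∂x^{i_k}). -/
def scomp {n : ℕ} (A B : Symb n) : Symb n :=
  fun x ξ => ∑ᶠ k : ℕ, (k.factorial : ℝ)⁻¹ *
    ∑ v : Fin k → Fin n, dXiL (List.ofFn v) A x ξ * dXL (List.ofFn v) B x ξ

/-- The fiberwise-linear symbol Xⁱξᵢ of a vector field. -/
def symb {n : ℕ} (X : (Fin n → ℝ) → (Fin n → ℝ)) : Symb n :=
  fun x ξ => ∑ i, X x i * ξ i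

/-- The embedding i^λ(X) = Xⁱξᵢ + λ Div X. -/
def isym {n : ℕ} (lam : ℝ) (X : (Fin n → ℝ) → (Fin n → ℝ)) : Symb n :=
  fun x ξ => (∑ i, X x i * ξ i) + lam * vdiv X x

/-- The action ℒ_X^{λ,μ}(A) = i^μ(X)∘A - A∘i^λ(X). -/
def Lop {n : ℕ} (lam mu : ℝ) (X : (Fin n → ℝ) → (Fin n → ℝ)) (A : Symb n) : Symb n :=
  fun x ξ => scomp (isym mu X) A x ξ - scomp A (isym lam X) x ξ

section AUX






variable {E : Type*} [NormedAddCommGroup E] [NormedSpace ℝ E]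

def Dg (v : E) (g : E → ℝ) : E → ℝ := fun x => fderiv ℝ g x v

-- conversions
variable {n : ℕ}
abbrev E1 (n : ℕ) := Fin n → ℝ
abbrev PP (n : ℕ) := E1 n × E1 n
def sgl (i : Fin n) : E1 n := Pi.single i 1
def ee (i : Fin n) : PP n := (sgl i, 0)
def ff (i : Fin n) : PP n := (0, sgl i)
def Gj (F : Symb n) : PP n → ℝ := fun p => F p.1 p.2

lemma pd_eq (i : Fin n) (g : E1 n → ℝ) : pd i g = Dg (sgl i) g := rfl

lemma dX_eq {F : Symb n} (h : Differentiable ℝ (Gj F)) (i : Fin n) (x ξ : E1 n) :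
    dX i F x ξ = Dg (ee i) (Gj F) (x, ξ) := by
  have h1 : HasFDerivAt (fun y : E1 n => (y, ξ)) (ContinuousLinearMap.inl ℝ (E1 n) (E1 n)) x :=
    hasFDerivAt_prodMk_left x ξ
  have h2 : HasFDerivAt (fun y : E1 n => F y ξ)
      ((fderiv ℝ (Gj F) (x, ξ)).comp (ContinuousLinearMap.inl ℝ (E1 n) (E1 n))) x :=
    by have := ((h (x, ξ)).hasFDerivAt).comp x h1; exact this
  simp [dX, h2.fderiv, Dg, ee, ContinuousLinearMap.inl]
  rfl

lemma dXi_eq {F : Symb n} (h : Differentiable ℝ (Gj F)) (i : Fin n) (x ξ : E1 n) :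
    dXi i F x ξ = Dg (ff i) (Gj F) (x, ξ) := by
  have h1 : HasFDerivAt (fun η : E1 n => (x, η)) (ContinuousLinearMap.inr ℝ (E1 n) (E1 n)) ξ :=
    hasFDerivAt_prodMk_right x ξ
  have h2 : HasFDerivAt (fun η : E1 n => F x η)
      ((fderiv ℝ (Gj F) (x, ξ)).comp (ContinuousLinearMap.inr ℝ (E1 n) (E1 n))) ξ :=
    ((h (x, ξ)).hasFDerivAt).comp ξ h1
  simp [dXi, h2.fderiv, Dg, ff, ContinuousLinearMap.inr]
  rfl

lemma Gj_dXi {F : Symb n} (h : Differentiable ℝ (Gj F)) (j : Fin n) :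
    Gj (dXi j F) = Dg (ff j) (Gj F) := by
  funext p
  have := dXi_eq h j p.1 p.2
  simpa [Gj] using this

lemma Dg_zero (g : E → ℝ) (x : E) : Dg (0 : E) g x = 0 := by
  simp [Dg]

lemma Dg_fst {g : E1 n → ℝ} {p : PP n} (h : DifferentiableAt ℝ g p.1) (v : PP n) :
    Dg v (fun q : PP n => g q.1) p = Dg v.1 g p.1 := by
  have h2 : HasFDerivAt (fun q : PP n => g q.1)
      ((fderiv ℝ g p.1).comp (ContinuousLinearMap.fst ℝ (E1 n) (E1 n))) p :=
    h.hasFDerivAt.comp p hasFDerivAt_fst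
  simp [Dg, h2.fderiv]

lemma Dg_xi (l : Fin n) (v : PP n) (p : PP n) :
    Dg v (fun q : PP n => q.2 l) p = v.2 l := by
  have : (fun q : PP n => q.2 l) =
      fun q => ((ContinuousLinearMap.proj l).comp (ContinuousLinearMap.snd ℝ (E1 n) (E1 n))) q := rfl
  rw [Dg, this, ContinuousLinearMap.fderiv]
  rfl

-- smoothness toolkit
lemma smooth_comp_fst {g : E1 n → ℝ} (h : ContDiff ℝ (⊤ : ℕ∞) g) :
    ContDiff ℝ (⊤ : ℕ∞) (fun p : PP n => g p.1) := h.comp contDiff_fst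

lemma smooth_xi (l : Fin n) : ContDiff ℝ (⊤ : ℕ∞) (fun p : PP n => p.2 l) :=
  ((ContinuousLinearMap.proj l).comp (ContinuousLinearMap.snd ℝ (E1 n) (E1 n))).contDiff

lemma smooth_comp' {X : E1 n → E1 n} (h : ContDiff ℝ (⊤ : ℕ∞) X) (l : Fin n) :
    ContDiff ℝ (⊤ : ℕ∞) (fun y => X y l) :=
  ContDiff.comp (ContinuousLinearMap.proj l : E1 n →L[ℝ] ℝ).contDiff h

lemma Dg_smooth {g : E → ℝ} (h : ContDiff ℝ (⊤ : ℕ∞) g) (v : E) : ContDiff ℝ (⊤ : ℕ∞) (Dg v g) :=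
  (h.fderiv_right (m := (⊤ : ℕ∞)) (by simp)).clm_apply contDiff_const

lemma Dg_comm {g : E → ℝ} (h : ContDiff ℝ (⊤ : ℕ∞) g) (v w : E) (x : E) :
    Dg v (Dg w g) x = Dg w (Dg v g) x := by
  have hd : Differentiable ℝ g := h.differentiable (by simp)
  have h1 : ContDiff ℝ (⊤ : ℕ∞) (fderiv ℝ g) := h.fderiv_right (m := (⊤ : ℕ∞)) (by simp)
  have h2 : DifferentiableAt ℝ (fderiv ℝ g) x := h1.differentiable (by simp) x
  have key : ∀ v w : E, Dg v (Dg w g) x = fderiv ℝ (fderiv ℝ g) x v w := by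
    intro v w
    have : Dg w g = fun y => (ContinuousLinearMap.apply ℝ ℝ w) (fderiv ℝ g y) := rfl
    rw [Dg, this]
    rw [show (fun y => (ContinuousLinearMap.apply ℝ ℝ w) (fderiv ℝ g y)) = (ContinuousLinearMap.apply ℝ ℝ w) ∘ (fderiv ℝ g) from rfl,
      fderiv_comp x ((ContinuousLinearMap.apply ℝ ℝ w).differentiableAt) h2]
    simp
  rw [key v w, key w v]
  exact second_derivative_symmetric (f' := fderiv ℝ g)
    (fun y => (hd y).hasFDerivAt) (h2.hasFDerivAt) v w

lemma Dg_comm_fun {g : E → ℝ} (h : ContDiff ℝ (⊤ : ℕ∞) g) (v w : E) :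
    Dg v (Dg w g) = Dg w (Dg v g) := funext (Dg_comm h v w)

lemma Dg_sum {ι : Type*} (s : Finset ι) (f : ι → E → ℝ) (x : E)
    (h : ∀ i ∈ s, DifferentiableAt ℝ (f i) x) (v : E) :
    Dg v (fun y => ∑ i ∈ s, f i y) x = ∑ i ∈ s, Dg v (f i) x := by
  simp [Dg, fderiv_fun_sum h]

lemma Dg_mul {a b : E → ℝ} (x : E) (ha : DifferentiableAt ℝ a x)
    (hb : DifferentiableAt ℝ b x) (v : E) :
    Dg v (fun y => a y * b y) x = Dg v a x * b x + a x * Dg v b x := by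
  simp [Dg, fderiv_fun_mul ha hb]; ring

lemma Dg_sub {a b : E → ℝ} (x : E) (ha : DifferentiableAt ℝ a x)
    (hb : DifferentiableAt ℝ b x) (v : E) :
    Dg v (fun y => a y - b y) x = Dg v a x - Dg v b x := by
  simp [Dg, fderiv_fun_sub ha hb]

lemma sum_sgl (c : Fin n → ℝ) (j : Fin n) : ∑ l, c l * sgl j l = c j := by
  simp [sgl, Pi.single_apply, mul_ite, Finset.sum_ite_eq']



section Exp
variable {n : ℕ} {X : (Fin n → ℝ) → (Fin n → ℝ)} {F : Symb n}

lemma smoothS_iff (F : Symb n) : SmoothS F ↔ ContDiff ℝ (⊤ : ℕ∞) (Gj F) := Iff.rfl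

lemma Gj_ham (hXl : ∀ l, ContDiff ℝ (⊤ : ℕ∞) (fun y => X y l)) (hF : SmoothS F) :
    Gj (ham X F) = fun p => (∑ i, X p.1 i * Dg (ee i) (Gj F) p)
      - ∑ i, (∑ l, Dg (sgl i) (fun y => X y l) p.1 * p.2 l) * Dg (ff i) (Gj F) p := by
  have hFd : Differentiable ℝ (Gj F) := hF.differentiable (by simp)
  funext p
  show ham X F p.1 p.2 = _
  rw [ham]
  simp only [dX_eq hFd, dXi_eq hFd, pd_eq]

lemma smooth_ham (hXl : ∀ l, ContDiff ℝ (⊤ : ℕ∞) (fun y => X y l)) (hF : SmoothS F) : SmoothS (ham X F) := by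
  rw [smoothS_iff]
  show ContDiff ℝ (⊤ : ℕ∞) (Gj (ham X F))
  rw [Gj_ham hXl hF]
  apply ContDiff.sub
  · exact ContDiff.sum fun i _ =>
      (smooth_comp_fst (hXl i)).mul (Dg_smooth hF (ee i))
  · exact ContDiff.sum fun i _ =>
      (ContDiff.sum fun l _ =>
        (smooth_comp_fst (Dg_smooth (hXl l) (sgl i))).mul (smooth_xi l)).mul
        (Dg_smooth hF (ff i))

lemma Gj_c1 (hXl : ∀ l, ContDiff ℝ (⊤ : ℕ∞) (fun y => X y l)) (hF : SmoothS F) :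
    Gj (c1op X F) = fun p => ∑ i, ∑ j,
      (∑ l, Dg (sgl i) (Dg (sgl j) (fun y => X y l)) p.1 * p.2 l) *
        Dg (ff i) (Dg (ff j) (Gj F)) p := by
  have hFd : Differentiable ℝ (Gj F) := hF.differentiable (by simp)
  funext p
  show c1op X F p.1 p.2 = _
  rw [c1op]
  have h1 : ∀ j : Fin n, Gj (dXi j F) = Dg (ff j) (Gj F) := fun j => Gj_dXi hFd j
  have h2 : ∀ j : Fin n, Differentiable ℝ (Gj (dXi j F)) := by
    intro j; rw [h1 j]; exact (Dg_smooth hF (ff j)).differentiable (by simp)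
  simp only [pd_eq]
  congr 1
  funext i
  congr 1
  funext j
  rw [dXi_eq (h2 j) i p.1 p.2, h1 j]

lemma smooth_c1 (hXl : ∀ l, ContDiff ℝ (⊤ : ℕ∞) (fun y => X y l)) (hF : SmoothS F) : SmoothS (c1op X F) := by
  rw [smoothS_iff]
  show ContDiff ℝ (⊤ : ℕ∞) (Gj (c1op X F))
  rw [Gj_c1 hXl hF]
  exact ContDiff.sum fun i _ => ContDiff.sum fun j _ =>
    (ContDiff.sum fun l _ =>
      (smooth_comp_fst (Dg_smooth (Dg_smooth (hXl l) (sgl j)) (sgl i))).mul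
        (smooth_xi l)).mul (Dg_smooth (Dg_smooth hF (ff j)) (ff i))

end Exp

section Der
variable {n : ℕ} {X : (Fin n → ℝ) → (Fin n → ℝ)} {F : Symb n}

lemma smooth_coef (A : Fin n → E1 n → ℝ) (hA : ∀ l, ContDiff ℝ (⊤ : ℕ∞) (A l)) :
    ContDiff ℝ (⊤ : ℕ∞) (fun q : PP n => ∑ l, A l q.1 * q.2 l) :=
  ContDiff.sum fun l _ => (smooth_comp_fst (hA l)).mul (smooth_xi l)

lemma Dg_coef_mul (A : Fin n → E1 n → ℝ) (hA : ∀ l, ContDiff ℝ (⊤ : ℕ∞) (A l))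
    (d : PP n → ℝ) (hd : ContDiff ℝ (⊤ : ℕ∞) d) (v p) :
    Dg v (fun q : PP n => (∑ l, A l q.1 * q.2 l) * d q) p
      = (∑ l, (Dg v.1 (A l) p.1 * p.2 l + A l p.1 * v.2 l)) * d p
        + (∑ l, A l p.1 * p.2 l) * Dg v d p := by
  rw [Dg_mul p ((smooth_coef A hA).differentiable (by simp) p) (hd.differentiable (by simp) p) v]
  have hs : Dg v (fun q : PP n => ∑ l, A l q.1 * q.2 l) p
      = ∑ l, (Dg v.1 (A l) p.1 * p.2 l + A l p.1 * v.2 l) := by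
    rw [Dg_sum Finset.univ _ p
      (fun l _ => (((smooth_comp_fst (hA l)).mul (smooth_xi l)).differentiable (by simp) p) ) v]
    refine Finset.sum_congr rfl fun l _ => ?_
    rw [Dg_mul p ((smooth_comp_fst (hA l)).differentiable (by simp) p)
      ((smooth_xi l).differentiable (by simp) p) v,
      Dg_fst ((hA l).differentiable (by simp) p.1) v, Dg_xi l v p]
  rw [hs]

lemma Dg_xfun_mul (a : E1 n → ℝ) (ha : ContDiff ℝ (⊤ : ℕ∞) a)
    (d : PP n → ℝ) (hd : ContDiff ℝ (⊤ : ℕ∞) d) (v p) :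
    Dg v (fun q : PP n => a q.1 * d q) p
      = Dg v.1 a p.1 * d p + a p.1 * Dg v d p := by
  rw [Dg_mul p ((smooth_comp_fst ha).differentiable (by simp) p) (hd.differentiable (by simp) p) v,
    Dg_fst (ha.differentiable (by simp) p.1) v]

lemma Dg_Gj_c1 (hXl : ∀ l, ContDiff ℝ (⊤ : ℕ∞) (fun y => X y l)) (hF : SmoothS F) (v p) :
    Dg v (Gj (c1op X F)) p = ∑ i, ∑ j,
      ((∑ l, (Dg v.1 (Dg (sgl i) (Dg (sgl j) (fun y => X y l))) p.1 * p.2 l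
        + Dg (sgl i) (Dg (sgl j) (fun y => X y l)) p.1 * v.2 l))
          * Dg (ff i) (Dg (ff j) (Gj F)) p
       + (∑ l, Dg (sgl i) (Dg (sgl j) (fun y => X y l)) p.1 * p.2 l)
          * Dg v (Dg (ff i) (Dg (ff j) (Gj F))) p) := by
  rw [Gj_c1 hXl hF]
  have hA : ∀ i j l : Fin n, ContDiff ℝ (⊤ : ℕ∞) (Dg (sgl i) (Dg (sgl j) (fun y => X y l))) :=
    fun i j l => Dg_smooth (Dg_smooth (hXl l) (sgl j)) (sgl i)
  have hterm : ∀ i j : Fin n, ContDiff ℝ (⊤ : ℕ∞) (fun q : PP n =>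
      (∑ l, Dg (sgl i) (Dg (sgl j) (fun y => X y l)) q.1 * q.2 l) *
        Dg (ff i) (Dg (ff j) (Gj F)) q) :=
    fun i j => (smooth_coef _ (hA i j)).mul (Dg_smooth (Dg_smooth hF (ff j)) (ff i))
  rw [Dg_sum Finset.univ _ p (fun i _ =>
    ((ContDiff.sum fun j _ => hterm i j).differentiable (by simp) p)) v]
  refine Finset.sum_congr rfl fun i _ => ?_
  rw [Dg_sum Finset.univ _ p (fun j _ => ((hterm i j).differentiable (by simp) p)) v]
  refine Finset.sum_congr rfl fun j _ => ?_
  exact Dg_coef_mul _ (hA i j) _ (Dg_smooth (Dg_smooth hF (ff j)) (ff i)) v p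

lemma Dg_Gj_ham (hXl : ∀ l, ContDiff ℝ (⊤ : ℕ∞) (fun y => X y l)) (hF : SmoothS F) (v p) :
    Dg v (Gj (ham X F)) p =
      (∑ i, (Dg v.1 (fun y => X y i) p.1 * Dg (ee i) (Gj F) p
        + X p.1 i * Dg v (Dg (ee i) (Gj F)) p))
      - ∑ i, ((∑ l, (Dg v.1 (Dg (sgl i) (fun y => X y l)) p.1 * p.2 l
          + Dg (sgl i) (fun y => X y l) p.1 * v.2 l)) * Dg (ff i) (Gj F) p
        + (∑ l, Dg (sgl i) (fun y => X y l) p.1 * p.2 l) * Dg v (Dg (ff i) (Gj F)) p) := by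
  rw [Gj_ham hXl hF]
  have hA : ∀ i l : Fin n, ContDiff ℝ (⊤ : ℕ∞) (Dg (sgl i) (fun y => X y l)) :=
    fun i l => Dg_smooth (hXl l) (sgl i)
  have h1 : ∀ i : Fin n, ContDiff ℝ (⊤ : ℕ∞) (fun q : PP n => X q.1 i * Dg (ee i) (Gj F) q) :=
    fun i => (smooth_comp_fst (hXl i)).mul (Dg_smooth hF (ee i))
  have h2 : ∀ i : Fin n, ContDiff ℝ (⊤ : ℕ∞) (fun q : PP n =>
      (∑ l, Dg (sgl i) (fun y => X y l) q.1 * q.2 l) * Dg (ff i) (Gj F) q) :=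
    fun i => (smooth_coef _ (hA i)).mul (Dg_smooth hF (ff i))
  rw [Dg_sub p ((ContDiff.sum fun i _ => h1 i).differentiable (by simp) p)
    ((ContDiff.sum fun i _ => h2 i).differentiable (by simp) p) v]
  congr 1
  · rw [Dg_sum Finset.univ _ p (fun i _ => (h1 i).differentiable (by simp) p) v]
    exact Finset.sum_congr rfl fun i _ =>
      Dg_xfun_mul _ (hXl i) _ (Dg_smooth hF (ee i)) v p
  · rw [Dg_sum Finset.univ _ p (fun i _ => (h2 i).differentiable (by simp) p) v]
    exact Finset.sum_congr rfl fun i _ =>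
      Dg_coef_mul _ (hA i) _ (Dg_smooth hF (ff i)) v p

end Der

lemma Dg_add {a b : E → ℝ} (x : E) (ha : DifferentiableAt ℝ a x)
    (hb : DifferentiableAt ℝ b x) (v : E) :
    Dg v (fun y => a y + b y) x = Dg v a x + Dg v b x := by
  simp [Dg, fderiv_fun_add ha hb]

section Main
variable {n : ℕ} {X Y : (Fin n → ℝ) → (Fin n → ℝ)} {F : Symb n}

lemma hamc1_exp (hXl : ∀ l, ContDiff ℝ (⊤ : ℕ∞) (fun y => X y l))
    (hYl : ∀ l, ContDiff ℝ (⊤ : ℕ∞) (fun y => Y y l)) (hF : SmoothS F) (x ξ : E1 n) :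
    ham X (c1op Y F) x ξ =
      (∑ k, X x k * ∑ i, ∑ j,
        ((∑ l, Dg (sgl k) (Dg (sgl i) (Dg (sgl j) (fun y => Y y l))) x * ξ l) *
            Dg (ff i) (Dg (ff j) (Gj F)) (x, ξ)
          + (∑ l, Dg (sgl i) (Dg (sgl j) (fun y => Y y l)) x * ξ l) *
            Dg (ee k) (Dg (ff i) (Dg (ff j) (Gj F))) (x, ξ)))
      - ∑ k, (∑ l, Dg (sgl k) (fun y => X y l) x * ξ l) * ∑ i, ∑ j,
          (Dg (sgl i) (Dg (sgl j) (fun y => Y y k)) x *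
            Dg (ff i) (Dg (ff j) (Gj F)) (x, ξ)
          + (∑ l, Dg (sgl i) (Dg (sgl j) (fun y => Y y l)) x * ξ l) *
            Dg (ff k) (Dg (ff i) (Dg (ff j) (Gj F))) (x, ξ)) := by
  have hc1Y : SmoothS (c1op Y F) := smooth_c1 hYl hF
  have h := congrFun (Gj_ham hXl hc1Y) (x, ξ)
  simp only [Gj] at h
  rw [h]
  simp only [Dg_Gj_c1 hYl hF, ee, ff, Dg_zero, Pi.zero_apply, zero_mul, mul_zero,
    add_zero, zero_add, Finset.sum_const_zero, sum_sgl]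

lemma Dgff_ham (hXl : ∀ l, ContDiff ℝ (⊤ : ℕ∞) (fun y => X y l)) (hF : SmoothS F) (j : Fin n) :
    Dg (ff j) (Gj (ham X F)) = fun q : PP n =>
      (∑ k, X q.1 k * Dg (ff j) (Dg (ee k) (Gj F)) q)
      - ∑ k, (Dg (sgl k) (fun y => X y j) q.1 * Dg (ff k) (Gj F) q
          + (∑ l, Dg (sgl k) (fun y => X y l) q.1 * q.2 l) *
              Dg (ff j) (Dg (ff k) (Gj F)) q) := by
  funext q
  rw [Dg_Gj_ham hXl hF (ff j) q]
  simp only [ff, Dg_zero, Pi.zero_apply, zero_mul, mul_zero, add_zero, zero_add,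
    Finset.sum_const_zero, sum_sgl]

lemma c1ham_exp (hXl : ∀ l, ContDiff ℝ (⊤ : ℕ∞) (fun y => X y l))
    (hYl : ∀ l, ContDiff ℝ (⊤ : ℕ∞) (fun y => Y y l)) (hF : SmoothS F) (x ξ : E1 n) :
    c1op Y (ham X F) x ξ = ∑ i, ∑ j,
      (∑ l, Dg (sgl i) (Dg (sgl j) (fun y => Y y l)) x * ξ l) *
      ((∑ k, X x k * Dg (ff i) (Dg (ff j) (Dg (ee k) (Gj F)))  (x, ξ))
       - ∑ k, (Dg (sgl k) (fun y => X y j) x * Dg (ff i) (Dg (ff k) (Gj F)) (x, ξ)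
           + (Dg (sgl k) (fun y => X y i) x * Dg (ff j) (Dg (ff k) (Gj F)) (x, ξ)
             + (∑ l, Dg (sgl k) (fun y => X y l) x * ξ l) *
                Dg (ff i) (Dg (ff j) (Dg (ff k) (Gj F))) (x, ξ)))) := by
  have hham : SmoothS (ham X F) := smooth_ham hXl hF
  have h := congrFun (Gj_c1 hYl hham) (x, ξ)
  simp only [Gj] at h
  rw [h]
  refine Finset.sum_congr rfl fun i _ => ?_
  refine Finset.sum_congr rfl fun j _ => ?_
  congr 1
  -- expand Dg (ff i) (Dg (ff j) (Gj (ham X F))) (x, ξ)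
  rw [Dgff_ham hXl hF j]
  have hs1 : ∀ k : Fin n, ContDiff ℝ (⊤ : ℕ∞) (fun q : PP n =>
      X q.1 k * Dg (ff j) (Dg (ee k) (Gj F)) q) :=
    fun k => (smooth_comp_fst (hXl k)).mul (Dg_smooth (Dg_smooth hF (ee k)) (ff j))
  have hs2 : ∀ k : Fin n, ContDiff ℝ (⊤ : ℕ∞) (fun q : PP n =>
      Dg (sgl k) (fun y => X y j) q.1 * Dg (ff k) (Gj F) q) :=
    fun k => (smooth_comp_fst (Dg_smooth (hXl j) (sgl k))).mul (Dg_smooth hF (ff k))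
  have hs3 : ∀ k : Fin n, ContDiff ℝ (⊤ : ℕ∞) (fun q : PP n =>
      (∑ l, Dg (sgl k) (fun y => X y l) q.1 * q.2 l) * Dg (ff j) (Dg (ff k) (Gj F)) q) :=
    fun k => (smooth_coef _ (fun l => Dg_smooth (hXl l) (sgl k))).mul
      (Dg_smooth (Dg_smooth hF (ff k)) (ff j))
  rw [Dg_sub (x, ξ)
    ((ContDiff.sum fun k _ => hs1 k).differentiable (by simp) (x, ξ))
    ((ContDiff.sum fun k _ => (hs2 k).add (hs3 k)).differentiable (by simp) (x, ξ)) (ff i)]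
  congr 1
  · rw [Dg_sum Finset.univ _ (x, ξ) (fun k _ => (hs1 k).differentiable (by simp) (x, ξ)) (ff i)]
    refine Finset.sum_congr rfl fun k _ => ?_
    have e := Dg_xfun_mul (fun y => X y k) (hXl k) _
      (Dg_smooth (Dg_smooth hF (ee k)) (ff j)) (ff i) (x, ξ)
    simp only [ff, Dg_zero, zero_mul, zero_add] at e
    exact e
  · rw [Dg_sum Finset.univ _ (x, ξ)
      (fun k _ => ((hs2 k).add (hs3 k)).differentiable (by simp) (x, ξ)) (ff i)]
    refine Finset.sum_congr rfl fun k _ => ?_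
    rw [Dg_add (x, ξ) ((hs2 k).differentiable (by simp) (x, ξ))
      ((hs3 k).differentiable (by simp) (x, ξ)) (ff i)]
    congr 1
    · have e := Dg_xfun_mul (Dg (sgl k) (fun y => X y j)) (Dg_smooth (hXl j) (sgl k)) _
        (Dg_smooth hF (ff k)) (ff i) (x, ξ)
      simp only [ff, Dg_zero, zero_mul, zero_add] at e
      exact e
    · have e := Dg_coef_mul (fun l => Dg (sgl k) (fun y => X y l))
        (fun l => Dg_smooth (hXl l) (sgl k)) _
        (Dg_smooth (Dg_smooth hF (ff k)) (ff j)) (ff i) (x, ξ)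
      simp only [ff, Dg_zero, Pi.zero_apply, zero_mul, mul_zero, add_zero, zero_add,
        Finset.sum_const_zero, sum_sgl] at e
      exact e


lemma vbr_comp_smooth (hXl : ∀ l, ContDiff ℝ (⊤ : ℕ∞) (fun y => X y l))
    (hYl : ∀ l, ContDiff ℝ (⊤ : ℕ∞) (fun y => Y y l)) (l : Fin n) :
    ContDiff ℝ (⊤ : ℕ∞) (fun y => vbr X Y y l) := by
  have : (fun y => vbr X Y y l) = fun y => ∑ k,
      (X y k * Dg (sgl k) (fun z => Y z l) y - Y y k * Dg (sgl k) (fun z => X z l) y) := rfl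
  rw [this]
  exact ContDiff.sum fun k _ =>
    ((hXl k).mul (Dg_smooth (hYl l) (sgl k))).sub ((hYl k).mul (Dg_smooth (hXl l) (sgl k)))

lemma pdj_vbr (hXl : ∀ l, ContDiff ℝ (⊤ : ℕ∞) (fun y => X y l))
    (hYl : ∀ l, ContDiff ℝ (⊤ : ℕ∞) (fun y => Y y l)) (j l : Fin n) :
    Dg (sgl j) (fun y => vbr X Y y l) = fun y => ∑ k,
      ((Dg (sgl j) (fun z => X z k) y * Dg (sgl k) (fun z => Y z l) y
        + X y k * Dg (sgl j) (Dg (sgl k) (fun z => Y z l)) y)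
      - (Dg (sgl j) (fun z => Y z k) y * Dg (sgl k) (fun z => X z l) y
        + Y y k * Dg (sgl j) (Dg (sgl k) (fun z => X z l)) y)) := by
  have hv : (fun y => vbr X Y y l) = fun y => ∑ k,
      (X y k * Dg (sgl k) (fun z => Y z l) y - Y y k * Dg (sgl k) (fun z => X z l) y) := rfl
  funext y
  rw [hv]
  have hd1 : ∀ k : Fin n, DifferentiableAt ℝ
      (fun y => X y k * Dg (sgl k) (fun z => Y z l) y - Y y k * Dg (sgl k) (fun z => X z l) y) y :=
    fun k => (((hXl k).mul (Dg_smooth (hYl l) (sgl k))).sub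
      ((hYl k).mul (Dg_smooth (hXl l) (sgl k)))).differentiable (by simp) y
  rw [Dg_sum Finset.univ _ y (fun k _ => hd1 k) (sgl j)]
  refine Finset.sum_congr rfl fun k _ => ?_
  rw [Dg_sub y (((hXl k).mul (Dg_smooth (hYl l) (sgl k))).differentiable (by simp) y)
    (((hYl k).mul (Dg_smooth (hXl l) (sgl k))).differentiable (by simp) y) (sgl j),
    Dg_mul y ((hXl k).differentiable (by simp) y)
      ((Dg_smooth (hYl l) (sgl k)).differentiable (by simp) y) (sgl j),
    Dg_mul y ((hYl k).differentiable (by simp) y)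
      ((Dg_smooth (hXl l) (sgl k)).differentiable (by simp) y) (sgl j)]

lemma pdij_vbr (hXl : ∀ l, ContDiff ℝ (⊤ : ℕ∞) (fun y => X y l))
    (hYl : ∀ l, ContDiff ℝ (⊤ : ℕ∞) (fun y => Y y l)) (i j l : Fin n) (x : E1 n) :
    Dg (sgl i) (Dg (sgl j) (fun y => vbr X Y y l)) x = ∑ k,
      (((Dg (sgl i) (Dg (sgl j) (fun z => X z k)) x * Dg (sgl k) (fun z => Y z l) x
         + Dg (sgl j) (fun z => X z k) x * Dg (sgl i) (Dg (sgl k) (fun z => Y z l)) x)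
        + (Dg (sgl i) (fun z => X z k) x * Dg (sgl j) (Dg (sgl k) (fun z => Y z l)) x
         + X x k * Dg (sgl i) (Dg (sgl j) (Dg (sgl k) (fun z => Y z l))) x))
      - ((Dg (sgl i) (Dg (sgl j) (fun z => Y z k)) x * Dg (sgl k) (fun z => X z l) x
         + Dg (sgl j) (fun z => Y z k) x * Dg (sgl i) (Dg (sgl k) (fun z => X z l)) x)
        + (Dg (sgl i) (fun z => Y z k) x * Dg (sgl j) (Dg (sgl k) (fun z => X z l)) x
         + Y x k * Dg (sgl i) (Dg (sgl j) (Dg (sgl k) (fun z => X z l))) x))) := by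
  rw [pdj_vbr hXl hYl j l]
  have hA : ∀ k : Fin n, ContDiff ℝ (⊤ : ℕ∞) (fun y =>
      Dg (sgl j) (fun z => X z k) y * Dg (sgl k) (fun z => Y z l) y
        + X y k * Dg (sgl j) (Dg (sgl k) (fun z => Y z l)) y) :=
    fun k => ((Dg_smooth (hXl k) (sgl j)).mul (Dg_smooth (hYl l) (sgl k))).add
      ((hXl k).mul (Dg_smooth (Dg_smooth (hYl l) (sgl k)) (sgl j)))
  have hB : ∀ k : Fin n, ContDiff ℝ (⊤ : ℕ∞) (fun y =>
      Dg (sgl j) (fun z => Y z k) y * Dg (sgl k) (fun z => X z l) y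
        + Y y k * Dg (sgl j) (Dg (sgl k) (fun z => X z l)) y) :=
    fun k => ((Dg_smooth (hYl k) (sgl j)).mul (Dg_smooth (hXl l) (sgl k))).add
      ((hYl k).mul (Dg_smooth (Dg_smooth (hXl l) (sgl k)) (sgl j)))
  rw [Dg_sum Finset.univ _ x (fun k _ => ((hA k).sub (hB k)).differentiable (by simp) x) (sgl i)]
  refine Finset.sum_congr rfl fun k _ => ?_
  rw [Dg_sub x ((hA k).differentiable (by simp) x) ((hB k).differentiable (by simp) x) (sgl i),
    Dg_add x (((Dg_smooth (hXl k) (sgl j)).mul (Dg_smooth (hYl l) (sgl k))).differentiable (by simp) x)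
      (((hXl k).mul (Dg_smooth (Dg_smooth (hYl l) (sgl k)) (sgl j))).differentiable (by simp) x) (sgl i),
    Dg_add x (((Dg_smooth (hYl k) (sgl j)).mul (Dg_smooth (hXl l) (sgl k))).differentiable (by simp) x)
      (((hYl k).mul (Dg_smooth (Dg_smooth (hXl l) (sgl k)) (sgl j))).differentiable (by simp) x) (sgl i),
    Dg_mul x ((Dg_smooth (hXl k) (sgl j)).differentiable (by simp) x)
      ((Dg_smooth (hYl l) (sgl k)).differentiable (by simp) x) (sgl i),
    Dg_mul x ((hXl k).differentiable (by simp) x)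
      ((Dg_smooth (Dg_smooth (hYl l) (sgl k)) (sgl j)).differentiable (by simp) x) (sgl i),
    Dg_mul x ((Dg_smooth (hYl k) (sgl j)).differentiable (by simp) x)
      ((Dg_smooth (hXl l) (sgl k)).differentiable (by simp) x) (sgl i),
    Dg_mul x ((hYl k).differentiable (by simp) x)
      ((Dg_smooth (Dg_smooth (hXl l) (sgl k)) (sgl j)).differentiable (by simp) x) (sgl i)]

lemma c1vbr_exp (hXl : ∀ l, ContDiff ℝ (⊤ : ℕ∞) (fun y => X y l))
    (hYl : ∀ l, ContDiff ℝ (⊤ : ℕ∞) (fun y => Y y l)) (hF : SmoothS F) (x ξ : E1 n) :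
    c1op (vbr X Y) F x ξ = ∑ i, ∑ j,
      (∑ l, (∑ k,
        (((Dg (sgl i) (Dg (sgl j) (fun z => X z k)) x * Dg (sgl k) (fun z => Y z l) x
           + Dg (sgl j) (fun z => X z k) x * Dg (sgl i) (Dg (sgl k) (fun z => Y z l)) x)
          + (Dg (sgl i) (fun z => X z k) x * Dg (sgl j) (Dg (sgl k) (fun z => Y z l)) x
           + X x k * Dg (sgl i) (Dg (sgl j) (Dg (sgl k) (fun z => Y z l))) x))
        - ((Dg (sgl i) (Dg (sgl j) (fun z => Y z k)) x * Dg (sgl k) (fun z => X z l) x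
           + Dg (sgl j) (fun z => Y z k) x * Dg (sgl i) (Dg (sgl k) (fun z => X z l)) x)
          + (Dg (sgl i) (fun z => Y z k) x * Dg (sgl j) (Dg (sgl k) (fun z => X z l)) x
           + Y x k * Dg (sgl i) (Dg (sgl j) (Dg (sgl k) (fun z => X z l))) x)))) * ξ l) *
        Dg (ff i) (Dg (ff j) (Gj F)) (x, ξ) := by
  have h := congrFun (Gj_c1 (vbr_comp_smooth hXl hYl) hF) (x, ξ)
  simp only [Gj] at h
  rw [h]
  simp only [pdij_vbr hXl hYl]



lemma sum_rot (f : Fin n → Fin n → Fin n → ℝ) :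
    ∑ a, ∑ b, ∑ c, f a b c = ∑ b, ∑ c, ∑ a, f a b c := by
  rw [Finset.sum_comm]
  exact Finset.sum_congr rfl fun _ _ => Finset.sum_comm

lemma sum_swap_inner (f : Fin n → Fin n → Fin n → ℝ) :
    ∑ a, ∑ b, ∑ c, f a b c = ∑ a, ∑ c, ∑ b, f a b c :=
  Finset.sum_congr rfl fun _ _ => Finset.sum_comm

lemma sum_swap13 (f : Fin n → Fin n → Fin n → ℝ) :
    ∑ a, ∑ b, ∑ c, f a b c = ∑ c, ∑ b, ∑ a, f a b c := by
  rw [sum_swap_inner, sum_rot]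

lemma sum_rot4 (f : Fin n → Fin n → Fin n → Fin n → ℝ) :
    ∑ a, ∑ b, ∑ c, ∑ d, f a b c d = ∑ b, ∑ c, ∑ d, ∑ a, f a b c d := by
  rw [Finset.sum_comm]
  exact Finset.sum_congr rfl fun b _ => sum_rot (fun a c d => f a b c d)

lemma sum_swap34 (f : Fin n → Fin n → Fin n → Fin n → ℝ) :
    ∑ a, ∑ b, ∑ c, ∑ d, f a b c d = ∑ a, ∑ b, ∑ d, ∑ c, f a b c d :=
  Finset.sum_congr rfl fun _ _ => Finset.sum_congr rfl fun _ _ => Finset.sum_comm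

lemma sum_rot3of4 (f : Fin n → Fin n → Fin n → Fin n → ℝ) :
    ∑ a, ∑ b, ∑ c, ∑ d, f a b c d = ∑ a, ∑ c, ∑ d, ∑ b, f a b c d :=
  Finset.sum_congr rfl fun a _ => sum_rot (fun b c d => f a b c d)

lemma sum_swap13of4 (f : Fin n → Fin n → Fin n → Fin n → ℝ) :
    ∑ a, ∑ b, ∑ c, ∑ d, f a b c d = ∑ c, ∑ b, ∑ a, ∑ d, f a b c d :=
  sum_swap13 (fun a b c => ∑ d, f a b c d)

lemma BC_reduce (ξ XC : Fin n → ℝ) (Xd : Fin n → Fin n → ℝ)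
    (Ydd : Fin n → Fin n → Fin n → ℝ) (Yddd : Fin n → Fin n → Fin n → Fin n → ℝ)
    (DD : Fin n → Fin n → ℝ) (DE1 DE2 T : Fin n → Fin n → Fin n → ℝ)
    (hYdd : ∀ l a b, Ydd l a b = Ydd l b a)
    (hYddd1 : ∀ l a b c, Yddd l a b c = Yddd l b a c)
    (hYddd2 : ∀ l a b c, Yddd l a b c = Yddd l a c b)
    (hDD : ∀ i j, DD i j = DD j i)
    (hDE : ∀ i j k, DE1 i j k = DE2 i j k)
    (hT1 : ∀ i j k, T i j k = T j i k)
    (hT2 : ∀ i j k, T i j k = T i k j) :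
    ((∑ k, XC k * ∑ i, ∑ j, ((∑ l, Yddd l k i j * ξ l) * DD i j
        + (∑ l, Ydd l i j * ξ l) * DE1 i j k))
      - ∑ k, (∑ l, Xd l k * ξ l) * ∑ i, ∑ j, (Ydd k i j * DD i j
        + (∑ l, Ydd l i j * ξ l) * T k i j))
    - (∑ i, ∑ j, (∑ l, Ydd l i j * ξ l) *
        ((∑ k, XC k * DE2 i j k)
         - ∑ k, (Xd j k * DD i k + (Xd i k * DD j k + (∑ l, Xd l k * ξ l) * T i j k))))
    = ∑ i, ∑ j, (∑ l, (∑ k, (XC k * Yddd l i j k + Xd k j * Ydd l i k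
        + Xd k i * Ydd l j k - Xd l k * Ydd k i j)) * ξ l) * DD i j := by
  simp only [Finset.mul_sum, Finset.sum_mul, mul_add, add_mul, mul_sub, sub_mul,
    Finset.sum_add_distrib, Finset.sum_sub_distrib]
  have h1 : (∑ k, ∑ i, ∑ j, ∑ l, XC k * (Yddd l k i j * ξ l * DD i j))
      = ∑ i, ∑ j, ∑ l, ∑ k, XC k * Yddd l i j k * ξ l * DD i j := by
    rw [sum_rot4]
    refine Finset.sum_congr rfl fun i _ => Finset.sum_congr rfl fun j _ =>
      Finset.sum_congr rfl fun l _ => Finset.sum_congr rfl fun k _ => ?_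
    rw [hYddd1, hYddd2]; ring
  have h2 : (∑ k, ∑ i, ∑ j, ∑ l, XC k * (Ydd l i j * ξ l * DE1 i j k))
      = ∑ i, ∑ j, ∑ k, ∑ l, Ydd l i j * ξ l * (XC k * DE2 i j k) := by
    rw [sum_rot4]
    conv_rhs => rw [sum_swap34]
    refine Finset.sum_congr rfl fun i _ => Finset.sum_congr rfl fun j _ =>
      Finset.sum_congr rfl fun l _ => Finset.sum_congr rfl fun k _ => ?_
    rw [hDE]; ring
  have h3 : (∑ k, ∑ i, ∑ j, ∑ l, Xd l k * ξ l * (Ydd k i j * DD i j))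
      = ∑ i, ∑ j, ∑ l, ∑ k, Xd l k * Ydd k i j * ξ l * DD i j := by
    rw [sum_rot4]
    refine Finset.sum_congr rfl fun i _ => Finset.sum_congr rfl fun j _ =>
      Finset.sum_congr rfl fun l _ => Finset.sum_congr rfl fun k _ => ?_
    ring
  have h4 : (∑ k, ∑ i, ∑ j, ∑ m, ∑ l, Xd l k * ξ l * (Ydd m i j * ξ m * T k i j))
      = ∑ i, ∑ j, ∑ k, ∑ m, ∑ l, Ydd l i j * ξ l * (Xd m k * ξ m * T i j k) := by
    rw [sum_rot (fun k i j => ∑ m, ∑ l, Xd l k * ξ l * (Ydd m i j * ξ m * T k i j))]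
    refine Finset.sum_congr rfl fun i _ => Finset.sum_congr rfl fun j _ =>
      Finset.sum_congr rfl fun k _ => ?_
    rw [Finset.sum_comm]
    refine Finset.sum_congr rfl fun m _ => Finset.sum_congr rfl fun l _ => ?_
    rw [hT1, hT2]; ring
  have h5 : (∑ i, ∑ j, ∑ k, ∑ l, Ydd l i j * ξ l * (Xd j k * DD i k))
      = ∑ i, ∑ j, ∑ l, ∑ k, Xd k j * Ydd l i k * ξ l * DD i j := by
    rw [sum_rot3of4]
    refine Finset.sum_congr rfl fun i _ => Finset.sum_congr rfl fun b _ =>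
      Finset.sum_congr rfl fun c _ => Finset.sum_congr rfl fun d _ => ?_
    ring
  have h6 : (∑ i, ∑ j, ∑ k, ∑ l, Ydd l i j * ξ l * (Xd i k * DD j k))
      = ∑ i, ∑ j, ∑ l, ∑ k, Xd k i * Ydd l j k * ξ l * DD i j := by
    rw [sum_swap13of4, sum_swap34]
    refine Finset.sum_congr rfl fun a _ => Finset.sum_congr rfl fun b _ =>
      Finset.sum_congr rfl fun c _ => Finset.sum_congr rfl fun d _ => ?_
    rw [hYdd, hDD]; ring
  linear_combination h1 + h2 - h3 - h4 + h5 + h6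

lemma key_algebra (ξ XC YC : Fin n → ℝ) (Xd Yd : Fin n → Fin n → ℝ)
    (Xdd Ydd : Fin n → Fin n → Fin n → ℝ)
    (Xddd Yddd : Fin n → Fin n → Fin n → Fin n → ℝ)
    (DD : Fin n → Fin n → ℝ) (DE1 DE2 T : Fin n → Fin n → Fin n → ℝ)
    (hXdd : ∀ l a b, Xdd l a b = Xdd l b a)
    (hYdd : ∀ l a b, Ydd l a b = Ydd l b a)
    (hXddd1 : ∀ l a b c, Xddd l a b c = Xddd l b a c)
    (hXddd2 : ∀ l a b c, Xddd l a b c = Xddd l a c b)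
    (hYddd1 : ∀ l a b c, Yddd l a b c = Yddd l b a c)
    (hYddd2 : ∀ l a b c, Yddd l a b c = Yddd l a c b)
    (hDD : ∀ i j, DD i j = DD j i)
    (hDE : ∀ i j k, DE1 i j k = DE2 i j k)
    (hT1 : ∀ i j k, T i j k = T j i k)
    (hT2 : ∀ i j k, T i j k = T i k j) :
    (∑ i, ∑ j, (∑ l, (∑ k,
        (((Xdd k i j * Yd l k + Xd k j * Ydd l i k)
          + (Xd k i * Ydd l j k + XC k * Yddd l i j k))
        - ((Ydd k i j * Xd l k + Yd k j * Xdd l i k)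
          + (Yd k i * Xdd l j k + YC k * Xddd l i j k)))) * ξ l) * DD i j)
    = (((∑ k, XC k * ∑ i, ∑ j, ((∑ l, Yddd l k i j * ξ l) * DD i j
          + (∑ l, Ydd l i j * ξ l) * DE1 i j k))
        - ∑ k, (∑ l, Xd l k * ξ l) * ∑ i, ∑ j, (Ydd k i j * DD i j
          + (∑ l, Ydd l i j * ξ l) * T k i j))
      - (∑ i, ∑ j, (∑ l, Ydd l i j * ξ l) *
          ((∑ k, XC k * DE2 i j k)
           - ∑ k, (Xd j k * DD i k + (Xd i k * DD j k + (∑ l, Xd l k * ξ l) * T i j k)))))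
    - (((∑ k, YC k * ∑ i, ∑ j, ((∑ l, Xddd l k i j * ξ l) * DD i j
          + (∑ l, Xdd l i j * ξ l) * DE1 i j k))
        - ∑ k, (∑ l, Yd l k * ξ l) * ∑ i, ∑ j, (Xdd k i j * DD i j
          + (∑ l, Xdd l i j * ξ l) * T k i j))
      - (∑ i, ∑ j, (∑ l, Xdd l i j * ξ l) *
          ((∑ k, YC k * DE2 i j k)
           - ∑ k, (Yd j k * DD i k + (Yd i k * DD j k + (∑ l, Yd l k * ξ l) * T i j k))))) := by
  rw [BC_reduce ξ XC Xd Ydd Yddd DD DE1 DE2 T hYdd hYddd1 hYddd2 hDD hDE hT1 hT2,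
    BC_reduce ξ YC Yd Xdd Xddd DD DE1 DE2 T hXdd hXddd1 hXddd2 hDD hDE hT1 hT2,
    ← Finset.sum_sub_distrib]
  refine Finset.sum_congr rfl fun i _ => ?_
  rw [← Finset.sum_sub_distrib]
  refine Finset.sum_congr rfl fun j _ => ?_
  rw [← sub_mul, ← Finset.sum_sub_distrib]
  congr 1
  refine Finset.sum_congr rfl fun l _ => ?_
  rw [← sub_mul, ← Finset.sum_sub_distrib]
  congr 1
  refine Finset.sum_congr rfl fun k _ => ?_
  ring

end Main
end AUX

/-- c₁ is a 1-cocycle: c₁([X,Y]) = [L_X, c₁(Y)] - [L_Y, c₁(X)]. -/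
theorem statement1 (n : ℕ) (X Y : (Fin n → ℝ) → (Fin n → ℝ))
    (hX : ContDiff ℝ (⊤ : ℕ∞) X) (hY : ContDiff ℝ (⊤ : ℕ∞) Y)
    (F : Symb n) (hF : SmoothS F) (x ξ : Fin n → ℝ) :
    c1op (vbr X Y) F x ξ =
      (ham X (c1op Y F) x ξ - c1op Y (ham X F) x ξ)
      - (ham Y (c1op X F) x ξ - c1op X (ham Y F) x ξ) := by
  have hXl : ∀ l, ContDiff ℝ (⊤ : ℕ∞) (fun y => X y l) := fun l =>
    ContDiff.comp (ContinuousLinearMap.proj l : (Fin n → ℝ) →L[ℝ] ℝ).contDiff hX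
  have hYl : ∀ l, ContDiff ℝ (⊤ : ℕ∞) (fun y => Y y l) := fun l =>
    ContDiff.comp (ContinuousLinearMap.proj l : (Fin n → ℝ) →L[ℝ] ℝ).contDiff hY
  have hGF : ContDiff ℝ (⊤ : ℕ∞) (Gj F) := hF
  rw [c1vbr_exp hXl hYl hF x ξ, hamc1_exp hXl hYl hF x ξ, c1ham_exp hXl hYl hF x ξ,
    hamc1_exp hYl hXl hF x ξ, c1ham_exp hYl hXl hF x ξ]
  exact key_algebra ξ (fun k => X x k) (fun k => Y x k)
    (fun l k => Dg (sgl k) (fun y => X y l) x)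
    (fun l k => Dg (sgl k) (fun y => Y y l) x)
    (fun l a b => Dg (sgl a) (Dg (sgl b) (fun y => X y l)) x)
    (fun l a b => Dg (sgl a) (Dg (sgl b) (fun y => Y y l)) x)
    (fun l a b c => Dg (sgl a) (Dg (sgl b) (Dg (sgl c) (fun y => X y l))) x)
    (fun l a b c => Dg (sgl a) (Dg (sgl b) (Dg (sgl c) (fun y => Y y l))) x)
    (fun i j => Dg (ff i) (Dg (ff j) (Gj F)) (x, ξ))
    (fun i j k => Dg (ee k) (Dg (ff i) (Dg (ff j) (Gj F))) (x, ξ))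
    (fun i j k => Dg (ff i) (Dg (ff j) (Dg (ee k) (Gj F))) (x, ξ))
    (fun i j k => Dg (ff i) (Dg (ff j) (Dg (ff k) (Gj F))) (x, ξ))
    (fun l a b => Dg_comm (hXl l) (sgl a) (sgl b) x)
    (fun l a b => Dg_comm (hYl l) (sgl a) (sgl b) x)
    (fun l a b c => Dg_comm (Dg_smooth (hXl l) (sgl c)) (sgl a) (sgl b) x)
    (fun l a b c => show Dg (sgl a) (Dg (sgl b) (Dg (sgl c) (fun y => X y l))) x
      = Dg (sgl a) (Dg (sgl c) (Dg (sgl b) (fun y => X y l))) x by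
      rw [Dg_comm_fun (hXl l) (sgl b) (sgl c)])
    (fun l a b c => Dg_comm (Dg_smooth (hYl l) (sgl c)) (sgl a) (sgl b) x)
    (fun l a b c => show Dg (sgl a) (Dg (sgl b) (Dg (sgl c) (fun y => Y y l))) x
      = Dg (sgl a) (Dg (sgl c) (Dg (sgl b) (fun y => Y y l))) x by
      rw [Dg_comm_fun (hYl l) (sgl b) (sgl c)])
    (fun i j => Dg_comm hGF (ff i) (ff j) (x, ξ))
    (fun i j k => show Dg (ee k) (Dg (ff i) (Dg (ff j) (Gj F))) (x, ξ)
      = Dg (ff i) (Dg (ff j) (Dg (ee k) (Gj F))) (x, ξ) by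
      rw [Dg_comm (Dg_smooth hGF (ff j)) (ee k) (ff i) ((x, ξ) : PP n),
        Dg_comm_fun hGF (ee k) (ff j)])
    (fun i j k => Dg_comm (Dg_smooth hGF (ff k)) (ff i) (ff j) (x, ξ))
    (fun i j k => show Dg (ff i) (Dg (ff j) (Dg (ff k) (Gj F))) (x, ξ)
      = Dg (ff i) (Dg (ff k) (Dg (ff j) (Gj F))) (x, ξ) by
      rw [Dg_comm_fun hGF (ff j) (ff k)])
end
end

section
/- In the variables λ, μ, set τ₀ = μ - λ, τ₁ = λ - 1/2, τ₂ = λ(λ-1). Then the monomials τ₀^{m₀}τ₁^{m₁}τ₂^{m₂}, as (m₀, m₁, m₂) ranges over triples of nonnegative integers with m₁ + 2m₂ = m for a fixed m, are linearly independent in the polynomial ring ℝ[λ, μ] (equivalently ℂ[λ,μ]). -/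
open Polynomial

/-- heart: polys X^(m-2k)·(X²-1/4)^k have distinct trailing degrees. -/
lemma lemA {ι : Type*} (m : ℕ) (κ : ι → ℕ) (t : Finset ι) :
    (∀ p ∈ t, ∀ q ∈ t, κ p = κ q → p = q) →
    (∀ p ∈ t, 2 * κ p ≤ m) →
    ∀ a : ι → ℝ,
    ∑ p ∈ t, a p • ((X : ℝ[X]) ^ (m - 2 * κ p) * ((X : ℝ[X]) ^ 2 - C (1/4)) ^ κ p) = 0 →
    ∀ p ∈ t, a p = 0 := by
  classical
  induction t using Finset.strongInduction with
  | _ t ih =>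
    intro hinj hle a hsum p hp
    have hne : (t.image κ).Nonempty := ⟨κ p, Finset.mem_image_of_mem κ hp⟩
    obtain ⟨ps, hps, hpsK⟩ := Finset.mem_image.1 ((t.image κ).max'_mem hne)
    set K := (t.image κ).max' hne with hK
    -- coefficient at m - 2K
    have hco := congrArg (fun P => Polynomial.coeff P (m - 2 * K)) hsum
    simp only [finset_sum_coeff, coeff_smul, coeff_zero] at hco
    have hterm : ∀ q ∈ t, q ≠ ps →
        ((X : ℝ[X]) ^ (m - 2 * κ q) * ((X : ℝ[X]) ^ 2 - C (1/4)) ^ κ q).coeff (m - 2 * K) = 0 := by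
      intro q hq hqne
      have h1 : κ q ≤ K := Finset.le_max' _ _ (Finset.mem_image_of_mem κ hq)
      have h2 : κ q ≠ K := fun h => hqne (hinj q hq ps hps (h.trans hpsK.symm))
      have h3 : 2 * K ≤ m := hpsK ▸ hle ps hps
      rw [mul_comm, coeff_mul_X_pow']
      have : ¬ (m - 2 * κ q ≤ m - 2 * K) := by omega
      simp [this]
    have hps0 : a ps * ((-(1/4) : ℝ)) ^ K = 0 := by
      rw [Finset.sum_eq_single ps (fun q hq hqne => by rw [hterm q hq hqne, smul_zero])
        (fun h => absurd hps h)] at hco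
      rw [hpsK, mul_comm, coeff_mul_X_pow'] at hco
      simp only [le_refl, if_pos, Nat.sub_self, coeff_zero_eq_eval_zero] at hco
      simpa [smul_eq_mul] using hco
    have haps : a ps = 0 := by
      have : ((-(1/4) : ℝ)) ^ K ≠ 0 := pow_ne_zero _ (by norm_num)
      exact (mul_eq_zero.1 hps0).resolve_right this
    by_cases hpe : p = ps
    · rw [hpe]; exact haps
    · have hsub : t.erase ps ⊂ t := Finset.erase_ssubset hps
      refine ih (t.erase ps) hsub (fun x hx y hy => hinj x (Finset.mem_of_mem_erase hx) y (Finset.mem_of_mem_erase hy))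
        (fun x hx => hle x (Finset.mem_of_mem_erase hx)) a ?_ p (Finset.mem_erase.2 ⟨hpe, hp⟩)
      have hsplit := Finset.add_sum_erase t (fun q => a q • ((X : ℝ[X]) ^ (m - 2 * κ q) * ((X : ℝ[X]) ^ 2 - C (1/4)) ^ κ q)) hps
      simp only [← hsplit, haps, zero_smul, zero_add] at hsum
      exact hsum

set_option maxHeartbeats 1000000 in
lemma lemB (m : ℕ) :
    LinearIndependent ℝ
      (fun p : {q : ℕ × ℕ × ℕ // q.2.1 + 2 * q.2.2 = m} =>
        (Polynomial.C ((X : ℝ[X]) ^ p.1.2.1 * ((X : ℝ[X]) ^ 2 - C (1/4)) ^ p.1.2.2)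
          * (X : Polynomial ℝ[X]) ^ p.1.1)) := by
  classical
  rw [linearIndependent_iff']
  intro s a hsum p₀ hp₀
  have hco := congrArg (fun P => Polynomial.coeff P p₀.1.1) hsum
  simp only [finset_sum_coeff, coeff_smul, coeff_zero, coeff_C_mul_X_pow] at hco
  have hco2 : ∑ p ∈ s.filter (fun p => p₀.1.1 = p.1.1),
      a p • ((X : ℝ[X]) ^ p.1.2.1 * ((X : ℝ[X]) ^ 2 - C (1/4)) ^ p.1.2.2) = 0 := by
    rw [Finset.sum_filter]
    have hsw : ∀ p ∈ s, (if p₀.1.1 = p.1.1 then a p • ((X : ℝ[X]) ^ p.1.2.1 * ((X : ℝ[X]) ^ 2 - C (1/4)) ^ p.1.2.2) else 0)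
        = a p • (if p₀.1.1 = p.1.1 then (X : ℝ[X]) ^ p.1.2.1 * ((X : ℝ[X]) ^ 2 - C (1/4)) ^ p.1.2.2 else 0) :=
      fun p _ => by split <;> simp
    rw [Finset.sum_congr rfl hsw]
    exact hco
  have hco3 : ∑ p ∈ s.filter (fun p => p₀.1.1 = p.1.1),
      a p • ((X : ℝ[X]) ^ (m - 2 * p.1.2.2) * ((X : ℝ[X]) ^ 2 - C (1/4)) ^ p.1.2.2) = 0 := by
    rw [← hco2]
    refine Finset.sum_congr rfl fun p _ => ?_
    have hpc := p.2
    have he : m - 2 * p.1.2.2 = p.1.2.1 := by omega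
    rw [he]
  have hinj : ∀ p ∈ s.filter (fun p => p₀.1.1 = p.1.1), ∀ q ∈ s.filter (fun p => p₀.1.1 = p.1.1),
      p.1.2.2 = q.1.2.2 → p = q := by
    intro p hp q hq hκ
    have hp' := (Finset.mem_filter.1 hp).2
    have hq' := (Finset.mem_filter.1 hq).2
    have h1 := p.2
    have h2 := q.2
    ext
    · omega
    · omega
    · exact hκ
  have hle : ∀ p ∈ s.filter (fun p : {q : ℕ × ℕ × ℕ // q.2.1 + 2 * q.2.2 = m} => p₀.1.1 = p.1.1),
      2 * p.1.2.2 ≤ m := fun p _ => by have := p.2; omega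
  have hmem : p₀ ∈ s.filter (fun p => p₀.1.1 = p.1.1) := Finset.mem_filter.2 ⟨hp₀, rfl⟩
  exact @lemA {q : ℕ × ℕ × ℕ // q.2.1 + 2 * q.2.2 = m} m (fun p => p.1.2.2) (s.filter (fun p => p₀.1.1 = p.1.1)) hinj hle a hco3 p₀ hmem

noncomputable def phi : MvPolynomial (Fin 2) ℝ →ₐ[ℝ] Polynomial (Polynomial ℝ) :=
  MvPolynomial.aeval ![Polynomial.C (X + C (1/2)), X + Polynomial.C (X + C (1/2))]

lemma phi0 : phi (MvPolynomial.X 1 - MvPolynomial.X 0) = (X : Polynomial ℝ[X]) := by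
  simp [phi]

lemma phi1 : phi (MvPolynomial.X 0 - MvPolynomial.C (1/2 : ℝ)) = Polynomial.C (X : ℝ[X]) := by
  simp only [phi, map_sub, MvPolynomial.aeval_X, MvPolynomial.aeval_C, Matrix.cons_val_zero]
  rw [Polynomial.algebraMap_apply, Polynomial.algebraMap_apply]
  simp only [Algebra.algebraMap_self_apply]
  rw [← Polynomial.C_sub, add_sub_cancel_right]

lemma phi2 : phi (MvPolynomial.X 0 * (MvPolynomial.X 0 - 1)) =
    Polynomial.C ((X : ℝ[X]) ^ 2 - C (1/4)) := by
  simp only [phi, map_mul, map_sub, map_one, MvPolynomial.aeval_X, Matrix.cons_val_zero]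
  rw [map_add, map_pow]
  have h1 : (Polynomial.C (C (1/2:ℝ)) : Polynomial ℝ[X]) + Polynomial.C (C (1/2)) - 1 = 0 := by
    rw [← map_add, ← map_add]; norm_num
  have h2 : (Polynomial.C (C (1/2:ℝ)) : Polynomial ℝ[X]) * Polynomial.C (C (1/2))
      - Polynomial.C (C (1/2)) + Polynomial.C (C (1/4)) = 0 := by
    rw [← map_mul, ← map_mul, ← map_sub, ← map_sub, ← map_add, ← map_add]; norm_num
  linear_combination (Polynomial.C (X:ℝ[X])) * h1 + h2

/-- with τ₀ = μ - λ, τ₁ = λ - 1/2, τ₂ = λ(λ-1) in ℝ[λ,μ],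
the monomials τ₀^{m₀}τ₁^{m₁}τ₂^{m₂} with m₁ + 2m₂ = m (m fixed) are
linearly independent. -/
theorem statement10 (m : ℕ) :
    LinearIndependent ℝ
      (fun p : {q : ℕ × ℕ × ℕ // q.2.1 + 2 * q.2.2 = m} =>
        (MvPolynomial.X 1 - MvPolynomial.X 0 : MvPolynomial (Fin 2) ℝ) ^ p.1.1
        * (MvPolynomial.X 0 - MvPolynomial.C (1/2 : ℝ)) ^ p.1.2.1
        * (MvPolynomial.X 0 * (MvPolynomial.X 0 - 1)) ^ p.1.2.2) := by
  apply LinearIndependent.of_comp phi.toLinearMap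
  have hc : (phi.toLinearMap ∘ fun p : {q : ℕ × ℕ × ℕ // q.2.1 + 2 * q.2.2 = m} =>
        (MvPolynomial.X 1 - MvPolynomial.X 0 : MvPolynomial (Fin 2) ℝ) ^ p.1.1
        * (MvPolynomial.X 0 - MvPolynomial.C (1/2 : ℝ)) ^ p.1.2.1
        * (MvPolynomial.X 0 * (MvPolynomial.X 0 - 1)) ^ p.1.2.2)
      = (fun p : {q : ℕ × ℕ × ℕ // q.2.1 + 2 * q.2.2 = m} =>
        (Polynomial.C ((X : ℝ[X]) ^ p.1.2.1 * ((X : ℝ[X]) ^ 2 - C (1/4)) ^ p.1.2.2)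
          * (X : Polynomial ℝ[X]) ^ p.1.1)) := by
    funext p
    simp only [Function.comp_apply, AlgHom.toLinearMap_apply]
    rw [map_mul, map_mul, map_pow, map_pow, map_pow, phi0, phi1, phi2]
    simp only [Polynomial.C_mul, Polynomial.C_pow]
    ring
  rw [hc]
  exact lemB m
end

section
/- In the polynomial ring generated by variables t₀^k (k≥0), t₁^k, t₂^k (k≥2), let 𝓡 be the ideal generated by t₁^k t₂^{k-1} - t₁^{k-2}t₂^k (k≥4), (t₀^k - t₀^{k-1})t₁^k t₂^{k-1} (k≥3), and (t₀^k - t₀^{k-2})t₂^k t₂^{k-2} (k≥4). Then every product of the form (t₀^k - t₀^{k-1})t₁^k · t₂^ℓ with ℓ ≥ 2 and of the form (t₀^k - t₀^{k-2})t₂^k · t₁^ℓ and (t₀^k - t₀^{k-2})t₂^k · t₂^ℓ, multiplied by any monomial, lies in 𝓡, where k ranges over values for which these generators are defined and ℓ over suitable indices making the monomials appear in the deformation (in particular, modulo the first relations, such products are divisible by the second and third families of generators). -/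
open MvPolynomial

/-- The variables t_i^k of the deformation, i ∈ {0,1,2}, k ∈ ℕ. -/
noncomputable def tv (i : Fin 3) (k : ℕ) : MvPolynomial (Fin 3 × ℕ) ℝ := X (i, k)

/-- The ideal 𝓡 generated by the relations R₂ᵏ, R₃ᵏ, R̃₃ᵏ. -/
noncomputable def Rideal : Ideal (MvPolynomial (Fin 3 × ℕ) ℝ) :=
  Ideal.span
    ({p | ∃ k : ℕ, 4 ≤ k ∧ p = tv 1 k * tv 2 (k-1) - tv 1 (k-2) * tv 2 k} ∪
     {p | ∃ k : ℕ, 3 ≤ k ∧ p = (tv 0 k - tv 0 (k-1)) * tv 1 k * tv 2 (k-1)} ∪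
     {p | ∃ k : ℕ, 4 ≤ k ∧ p = (tv 0 k - tv 0 (k-2)) * tv 2 k * tv 2 (k-2)})

lemma mem1 {k : ℕ} (hk : 4 ≤ k) :
    tv 1 k * tv 2 (k-1) - tv 1 (k-2) * tv 2 k ∈ Rideal :=
  Ideal.subset_span (Or.inl (Or.inl ⟨k, hk, rfl⟩))

lemma mem2 {k : ℕ} (hk : 3 ≤ k) :
    (tv 0 k - tv 0 (k-1)) * tv 1 k * tv 2 (k-1) ∈ Rideal :=
  Ideal.subset_span (Or.inl (Or.inr ⟨k, hk, rfl⟩))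

lemma mem3 {k : ℕ} (hk : 4 ≤ k) :
    (tv 0 k - tv 0 (k-2)) * tv 2 k * tv 2 (k-2) ∈ Rideal :=
  Ideal.subset_span (Or.inr ⟨k, hk, rfl⟩)

/-- products of the indicated form, multiplied by any polynomial,
lie in the ideal 𝓡; in particular (t₀ᵏ - t₀^{k-1})t₁^{k-2}t₂ᵏ ∈ 𝓡 modulo the
quadratic relations. -/
theorem statement17 (q : MvPolynomial (Fin 3 × ℕ) ℝ) (k : ℕ) :
    (3 ≤ k → q * ((tv 0 k - tv 0 (k-1)) * tv 1 k * tv 2 (k-1)) ∈ Rideal) ∧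
    (4 ≤ k → q * ((tv 0 k - tv 0 (k-1)) * tv 1 (k-2) * tv 2 k) ∈ Rideal) ∧
    (4 ≤ k → q * ((tv 0 k - tv 0 (k-2)) * tv 2 k * tv 2 (k-2)) ∈ Rideal) := by
  refine ⟨fun hk => Ideal.mul_mem_left _ q (mem2 hk),
    fun hk => ?_, fun hk => Ideal.mul_mem_left _ q (mem3 hk)⟩
  have h : q * ((tv 0 k - tv 0 (k-1)) * tv 1 (k-2) * tv 2 k) =
      q * ((tv 0 k - tv 0 (k-1)) * tv 1 k * tv 2 (k-1)) -
      (q * (tv 0 k - tv 0 (k-1))) *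
        (tv 1 k * tv 2 (k-1) - tv 1 (k-2) * tv 2 k) := by ring
  rw [h]
  exact sub_mem (Ideal.mul_mem_left _ q (mem2 (by omega)))
    (Ideal.mul_mem_left _ _ (mem1 hk))
end
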